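/- Let H be a complex Hilbert space, n a positive integer, B : H → ℂⁿ a continuous linear map with Hilbert-space adjoint B* : ℂⁿ → H, and set K := B ∘ B* (a continuous linear endomorphism of ℂⁿ). Let γ > 0 be real, let R be a self-adjoint invertible continuous linear endomorphism of ℂⁿ with R ∘ R = K + γ·id, let T be any continuous linear endomorphism of ℂⁿ, let s ∈ ℂ, and let u ∈ ℂⁿ satisfy (T ∘ K ∘ T* ∘ K) u = s • ((K + γ·id) u). Then, setting G := B* ∘ R⁻¹ ∘ T ∘ B : H → H and g := B*(R u) ∈ H, one has (G ∘ G*) g = s • g. -/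

import Mathlib

open ContinuousLinearMap

/-- Key reduction in Dual Toeplitz RRR: if `u` solves the generalized eigenvalue problem
`T K T* K u = s • ((K + γ) u)` with `K = B B*`, and `R` is a self-adjoint invertible square
root of `K + γ·id`, then `g := B*(R u)` is an eigenvector of `G G*` with eigenvalue `s`,
where `G := B* ∘ R⁻¹ ∘ T ∘ B`. -/
theorem stmt_3 {H : Type*} [NormedAddCommGroup H] [InnerProductSpace ℂ H] [CompleteSpace H]
    (n : ℕ) (hn : 0 < n)
    (B : H →L[ℂ] EuclideanSpace ℂ (Fin n))
    (γ : ℝ) (hγ : 0 < γ)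
    (R : EuclideanSpace ℂ (Fin n) →L[ℂ] EuclideanSpace ℂ (Fin n))
    (hRsa : IsSelfAdjoint R) (hRunit : IsUnit R)
    (hRR : R ∘L R = B ∘L adjoint B + (γ : ℂ) • (1 : EuclideanSpace ℂ (Fin n) →L[ℂ] EuclideanSpace ℂ (Fin n)))
    (T : EuclideanSpace ℂ (Fin n) →L[ℂ] EuclideanSpace ℂ (Fin n))
    (s : ℂ) (u : EuclideanSpace ℂ (Fin n))
    (hu : (T ∘L (B ∘L adjoint B) ∘L adjoint T ∘L (B ∘L adjoint B)) u
        = s • ((B ∘L adjoint B + (γ : ℂ) • (1 : EuclideanSpace ℂ (Fin n) →L[ℂ] EuclideanSpace ℂ (Fin n))) u)) :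
    ((adjoint B ∘L Ring.inverse R ∘L T ∘L B) ∘L
        adjoint (adjoint B ∘L Ring.inverse R ∘L T ∘L B)) (adjoint B (R u))
      = s • (adjoint B (R u)) := by
  set K : EuclideanSpace ℂ (Fin n) →L[ℂ] EuclideanSpace ℂ (Fin n) := B ∘L adjoint B with hK
  set Q : EuclideanSpace ℂ (Fin n) →L[ℂ] EuclideanSpace ℂ (Fin n) := Ring.inverse R with hQ
  have hQadj : adjoint Q = Q := by
    rw [← star_eq_adjoint, hQ, ← Ring.inverse_star, hRsa.star_eq]
  have hQR : Q * R = 1 := Ring.inverse_mul_cancel R hRunit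
  have hRQ : R * Q = 1 := Ring.mul_inverse_cancel R hRunit
  have hRR' : R * R = K + (γ : ℂ) • 1 := hRR
  have hKdef : K = R * R - (γ : ℂ) • 1 := by rw [hRR']; abel
  have hKR : K * R = R * K := by
    rw [hKdef]
    simp only [sub_mul, mul_sub, smul_mul_assoc, mul_smul_comm, one_mul, mul_one, mul_assoc]
  have hQK : Q * K = K * Q := by
    calc Q * K = Q * K * (R * Q) := by rw [hRQ, mul_one]
    _ = Q * (K * R) * Q := by noncomm_ring
    _ = Q * (R * K) * Q := by rw [hKR]
    _ = (Q * R) * (K * Q) := by noncomm_ring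
    _ = K * Q := by rw [hQR, one_mul]
  have hQKR : Q * (K * R) = K := by
    rw [← mul_assoc, hQK, mul_assoc, hQR, mul_one]
  have happ : ∀ (f g : EuclideanSpace ℂ (Fin n) →L[ℂ] EuclideanSpace ℂ (Fin n)) x,
      (f * g) x = f (g x) := fun _ _ _ => rfl
  have hBBa : ∀ x, B (adjoint B x) = K x := fun _ => rfl
  have hQKRu : Q (K (R u)) = K u := by
    have := DFunLike.congr_fun hQKR u
    simpa [happ] using this
  have hu' : T (K (adjoint T (K u))) = s • (K u + γ • u) := by
    have := hu
    simp only [comp_apply, add_apply, smul_apply, ContinuousLinearMap.one_apply, ← hK] at this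
    convert this using 2
    rw [Complex.coe_smul]
  have hRRu : R (R u) = K u + γ • u := by
    have := DFunLike.congr_fun hRR u
    simp only [comp_apply, add_apply, smul_apply, ContinuousLinearMap.one_apply, ← hK] at this
    convert this using 2
    rw [Complex.coe_smul]
  have hQRx : ∀ x, Q (R x) = x := fun x => by
    have := DFunLike.congr_fun hQR x
    simpa [happ] using this
  simp only [adjoint_comp, adjoint_adjoint, hQadj, comp_apply]
  simp only [hBBa]
  rw [hQKRu, hu', map_smul, map_smul, ← hRRu, hQRx]
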